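/- arXiv:2202.10872 — 2 statements merged into one kernel-verified Lean document; each statement's English description precedes it below -/
import Mathlib

section
/- The Choquet integral with respect to a symmetric monotone measure μ on a finite set X of size n equals the ordered weighted average (OWA) with weight vector w_i = μ(A_i) − μ(A_{i−1}), where A_i denotes any subset of cardinality i; that is, ∫f dμ = Σ_{i=1}^n w_i · f(x_{σ(i)}), where σ orders values decreasingly: f(x_{σ(1)}) ≥ ... ≥ f(x_{σ(n)}). -/
open Finset

structure MonMeasure (n : ℕ) where
  m : Finset (Fin n) → ℝ
  empty : m ∅ = 0
  univ : m Finset.univ = 1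
  nonneg : ∀ A, 0 ≤ m A
  le_one : ∀ A, m A ≤ 1
  mono : ∀ ⦃A B : Finset (Fin n)⦄, A ⊆ B → m A ≤ m B

/-- The value `f(x*_{i+1})` (1-based) of the increasing ordering `σ`, i.e. `f (σ i)` (0-based). -/
noncomputable def vals {n : ℕ} (f : Fin n → ℝ) (σ : Equiv.Perm (Fin n)) (i : ℕ) : ℝ :=
  if h : i < n then f (σ ⟨i, h⟩) else 0

/-- The set `A*_{i+1} = {x*_{i+1}, ..., x*_n}` (1-based), i.e. `{σ j : j ≥ i}` (0-based). -/
def upSet {n : ℕ} (σ : Equiv.Perm (Fin n)) (i : ℕ) : Finset (Fin n) :=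
  (Finset.univ.filter (fun j : Fin n => i ≤ (j : ℕ))).image σ

/-- The Choquet integral `∫ f dμ = Σ_{i=1}^n μ(A*_i)·[f(x*_i) − f(x*_{i−1})]`, where
`σ` enumerates `X` so that `f∘σ` is increasing, and `f(x*_0) := 0`. -/
noncomputable def choquet {n : ℕ} (μ : Finset (Fin n) → ℝ) (f : Fin n → ℝ)
    (σ : Equiv.Perm (Fin n)) : ℝ :=
  ∑ i ∈ Finset.range n,
    μ (upSet σ i) * (vals f σ i - if i = 0 then 0 else vals f σ (i - 1))

/-! By symmetry `μ(A*_i)` depends only on `|A*_i| = n - i + 1`, so summation by parts turns the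
Choquet sum into `Σ_i (μ_{n-i+1} - μ_{n-i}) f(x*_i)`, with `μ_k` the measure of any `k`-set.
Reversing the summation index turns the increasing ordering into the decreasing one: the sorted
list of values of `f` does not depend on which sorting permutation produced it. -/

theorem Finset.sum_range_mul_sub_prev {R : Type*} [CommRing R] {n : ℕ} (a v : ℕ → R)
    (ha : a n = 0) :
    ∑ i ∈ range n, a i * (v i - if i = 0 then 0 else v (i - 1)) =
      ∑ i ∈ range n, (a i - a (i + 1)) * v i := by
  have shift : ∑ i ∈ range n, a i * (if i = 0 then 0 else v (i - 1)) =
      ∑ i ∈ range n, a (i + 1) * v i := by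
    cases n with
    | zero => simp
    | succ m =>
      rw [sum_range_succ' (fun i ↦ a i * _), sum_range_succ (fun i ↦ a (i + 1) * v i), ha]
      simp
  simp only [mul_sub, sub_mul, sum_sub_distrib, shift]

theorem card_upSet {n : ℕ} (σ : Equiv.Perm (Fin n)) (i : ℕ) : (upSet σ i).card = n - i := by
  have hcompl : univ.filter (fun j : Fin n => i ≤ (j : ℕ)) =
      (univ.filter (fun j : Fin n => (j : ℕ) < i))ᶜ := by
    ext j; simp
  rw [upSet, card_image_of_injective _ σ.injective, hcompl, card_compl, Fin.card_filter_val_lt,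
    Fintype.card_fin]
  omega

theorem choquet_eq_of_symm {n : ℕ} {μ : Finset (Fin n) → ℝ} (hμ : μ ∅ = 0)
    (hsymm : ∀ A B : Finset (Fin n), A.card = B.card → μ A = μ B) (f : Fin n → ℝ)
    (σ : Equiv.Perm (Fin n)) :
    choquet μ f σ =
      ∑ i ∈ range n, (μ (univ.filter (fun k : Fin n => (k : ℕ) < n - i)) -
        μ (univ.filter (fun k : Fin n => (k : ℕ) < n - (i + 1)))) * vals f σ i := by
  have hup : ∀ i ∈ range n,
      μ (upSet σ i) = μ (univ.filter (fun k : Fin n => (k : ℕ) < n - i)) :=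
    fun i _ ↦ hsymm _ _ (by rw [card_upSet, Fin.card_filter_val_lt]; omega)
  rw [choquet, sum_congr rfl fun i hi ↦ by rw [hup i hi]]
  exact sum_range_mul_sub_prev (fun i ↦ μ (univ.filter (fun k : Fin n => (k : ℕ) < n - i)))
    (vals f σ) (by simpa using hμ)

theorem vals_sub_one_sub_of_monotone_of_antitone {n : ℕ} {f : Fin n → ℝ}
    {σ τ : Equiv.Perm (Fin n)} (hσ : Monotone (fun i : Fin n => f (σ i)))
    (hτ : Antitone (fun i : Fin n => f (τ i))) {j : ℕ} (hj : j < n) :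
    vals f τ (n - 1 - j) = vals f σ j := by
  have hsorted : f ∘ σ = f ∘ (Fin.revPerm.trans τ) :=
    Tuple.unique_monotone hσ fun a b hab ↦ hτ (Fin.rev_le_rev.mpr hab)
  have hrev : Fin.rev (⟨j, hj⟩ : Fin n) = ⟨n - 1 - j, by omega⟩ := by
    ext; simp only [Fin.val_rev]; omega
  rw [vals, vals, dif_pos (by omega), dif_pos hj, ← hrev]
  exact (congrFun hsorted ⟨j, hj⟩).symm

/-- The Choquet integral w.r.t. a symmetric monotone measure is the OWA operator with
weights `w_i = μ(A_i) − μ(A_{i−1})`, where `A_i` is any subset of cardinality `i`, and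
the aggregated values are ordered decreasingly by `τ`. -/
theorem stmt_3 (n : ℕ) (M : MonMeasure n)
    (hsymm : ∀ A B : Finset (Fin n), A.card = B.card → M.m A = M.m B)
    (f : Fin n → ℝ) (σ τ : Equiv.Perm (Fin n))
    (hσ : Monotone (fun i : Fin n => f (σ i)))
    (hτ : Antitone (fun i : Fin n => f (τ i))) :
    choquet M.m f σ =
      ∑ i ∈ Finset.range n,
        (M.m (Finset.univ.filter (fun k : Fin n => (k : ℕ) < i + 1)) -
          M.m (Finset.univ.filter (fun k : Fin n => (k : ℕ) < i))) * vals f τ i := by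
  rw [choquet_eq_of_symm M.empty hsymm]
  conv_rhs => rw [← sum_range_reflect]
  refine sum_congr rfl fun j hj ↦ ?_
  have hj := mem_range.mp hj
  rw [vals_sub_one_sub_of_monotone_of_antitone hσ hτ hj, show n - 1 - j + 1 = n - j by omega,
    show n - 1 - j = n - (j + 1) by omega]
end

section
/- Duality of Choquet-based fuzzy rough approximations: let I be an implicator, N_s(x) = 1−x the standard negator, and C(x,y) := N_s(I(x, N_s(y))) the induced conjunctor. Then for any fuzzy relation R on finite X, monotone measure μ, and fuzzy set A, apr̲_{R,μ}A = co_{N_s}(apr̄_{R,μ̄}(co_{N_s}(A))), where co_{N_s}(A)(x) = 1 − A(x), μ̄(B) = 1 − μ(X∖B), (apr̲_{R,μ}A)(y) = ∫ I(R(x,y),A(x)) dμ(x), and (apr̄_{R,μ}A)(y) = ∫ C(R(x,y),A(x)) dμ(x). -/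
open Finset

namespace Stmt19Aux

variable {n : ℕ}

lemma vals_eq (f : Fin n → ℝ) (σ : Equiv.Perm (Fin n)) {i : ℕ} (h : i < n) :
    vals f σ i = f (σ ⟨i, h⟩) := dif_pos h

lemma mem_upSet {σ : Equiv.Perm (Fin n)} {i : ℕ} {x : Fin n} :
    x ∈ upSet σ i ↔ i ≤ ((σ.symm x : Fin n) : ℕ) := by
  simp only [upSet, Finset.mem_image, Finset.mem_filter, Finset.mem_univ, true_and]
  constructor
  · rintro ⟨j, hj, rfl⟩; simpa using hj
  · intro h; exact ⟨σ.symm x, h, by simp⟩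

lemma upSet_zero (σ : Equiv.Perm (Fin n)) : upSet σ 0 = Finset.univ := by
  ext x; simp [mem_upSet]

lemma upSet_of_le (σ : Equiv.Perm (Fin n)) {i : ℕ} (h : n ≤ i) : upSet σ i = ∅ := by
  ext x; simp only [mem_upSet, Finset.notMem_empty, iff_false]
  have := (σ.symm x).isLt; omega

lemma choquet_abel (μ : Finset (Fin n) → ℝ) (hμ : μ ∅ = 0) (f : Fin n → ℝ)
    (σ : Equiv.Perm (Fin n)) :
    choquet μ f σ =
      ∑ i ∈ Finset.range n, (μ (upSet σ i) - μ (upSet σ (i + 1))) * vals f σ i := by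
  cases n with
  | zero => simp [choquet]
  | succ m =>
    unfold choquet
    simp only [mul_sub, sub_mul, Finset.sum_sub_distrib]
    congr 1
    rw [Finset.sum_range_succ', Finset.sum_range_succ]
    simp only [Nat.add_sub_cancel, if_neg (Nat.succ_ne_zero _), if_pos rfl, mul_zero, add_zero]
    rw [upSet_of_le σ (le_refl (m+1)), hμ, zero_mul, add_zero]
    simp

lemma upSet_eq_filter (g : Fin n → ℝ) (τ : Equiv.Perm (Fin n)) (hτ : Monotone (g ∘ τ))
    {i : ℕ} (h0 : 0 < i) (hi : i < n) (hlt : vals g τ (i - 1) < vals g τ i) :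
    upSet τ i = Finset.univ.filter (fun x => vals g τ i ≤ g x) := by
  ext x
  rw [mem_upSet, Finset.mem_filter]
  constructor
  · intro h
    refine ⟨Finset.mem_univ _, ?_⟩
    have hle : (⟨i, hi⟩ : Fin n) ≤ τ.symm x := h
    have := hτ hle
    simpa [Function.comp, vals_eq g τ hi] using this
  · rintro ⟨-, h⟩
    by_contra hc
    push_neg at hc
    have h1 : τ.symm x ≤ (⟨i - 1, by omega⟩ : Fin n) := by
      show ((τ.symm x : Fin n) : ℕ) ≤ i - 1; omega
    have h2 := hτ h1
    rw [vals_eq g τ (show i - 1 < n by omega), vals_eq g τ hi] at hlt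
    simp only [Function.comp, Equiv.apply_symm_apply] at h2
    rw [vals_eq g τ hi] at h
    linarith

lemma choquet_congr (μ : Finset (Fin n) → ℝ) (g : Fin n → ℝ) (τ τ' : Equiv.Perm (Fin n))
    (hτ : Monotone (g ∘ τ)) (hτ' : Monotone (g ∘ τ')) :
    choquet μ g τ = choquet μ g τ' := by
  have hvals : ∀ i : ℕ, vals g τ i = vals g τ' i := by
    have h1 : g ∘ τ = g ∘ Tuple.sort g := Tuple.comp_sort_eq_comp_iff_monotone.mpr hτ
    have h2 : g ∘ τ' = g ∘ Tuple.sort g := Tuple.comp_sort_eq_comp_iff_monotone.mpr hτ'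
    intro i
    unfold vals
    split
    · next h =>
      have := congrFun (h1.trans h2.symm) ⟨i, h⟩
      simpa using this
    · rfl
  unfold choquet
  refine Finset.sum_congr rfl fun i hi => ?_
  rw [Finset.mem_range] at hi
  rcases Nat.eq_zero_or_pos i with rfl | h0
  · rw [upSet_zero, upSet_zero, hvals]
  · rw [if_neg (by omega), if_neg (by omega), hvals, hvals]
    by_cases hv : vals g τ' (i - 1) = vals g τ' i
    · rw [hv, sub_self, mul_zero, mul_zero]
    · have hlt' : vals g τ' (i - 1) < vals g τ' i := by
        refine lt_of_le_of_ne ?_ hv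
        rw [vals_eq g τ' (show i - 1 < n by omega), vals_eq g τ' hi]
        exact hτ' (show (⟨i-1, by omega⟩ : Fin n) ≤ ⟨i, hi⟩ from by simp only [Fin.mk_le_mk]; omega)
      have hlt : vals g τ (i - 1) < vals g τ i := by rw [hvals, hvals]; exact hlt'
      rw [upSet_eq_filter g τ hτ h0 hi hlt, upSet_eq_filter g τ' hτ' h0 hi hlt', hvals]

lemma upSet_revPerm (σ : Equiv.Perm (Fin n)) (i : ℕ) :
    upSet (Fin.revPerm.trans σ) i = Finset.univ \ upSet σ (n - i) := by
  ext x
  rw [mem_upSet, Finset.mem_sdiff, mem_upSet]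
  simp only [Equiv.symm_trans_apply, Fin.revPerm_symm, Fin.revPerm_apply, Fin.val_rev,
    Finset.mem_univ, true_and]
  have := (σ.symm x).isLt
  omega

end Stmt19Aux

/-- Duality of Choquet-based fuzzy rough approximations: with the induced conjunctor
`C(a,b) = 1 − I(a, 1 − b)` and the dual measure `μ̄(B) = 1 − μ(X∖B)`, one has
`apr̲_{R,μ}A = co_{N_s}(apr̄_{R,μ̄}(co_{N_s}(A)))` (evaluated at any point `y`, with any
valid increasing orderings for the two Choquet integrals). -/
theorem stmt_19 (n : ℕ) (R : Fin n → Fin n → ℝ) (A : Fin n → ℝ)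
    (hR : ∀ x y, R x y ∈ Set.Icc (0 : ℝ) 1) (hA : ∀ x, A x ∈ Set.Icc (0 : ℝ) 1)
    (I : ℝ → ℝ → ℝ)
    (hIant : ∀ a b c : ℝ, a ∈ Set.Icc (0 : ℝ) 1 → b ∈ Set.Icc (0 : ℝ) 1 →
      c ∈ Set.Icc (0 : ℝ) 1 → a ≤ b → I b c ≤ I a c)
    (hImon : ∀ a b c : ℝ, a ∈ Set.Icc (0 : ℝ) 1 → b ∈ Set.Icc (0 : ℝ) 1 →
      c ∈ Set.Icc (0 : ℝ) 1 → b ≤ c → I a b ≤ I a c)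
    (hI00 : I 0 0 = 1) (hI01 : I 0 1 = 1) (hI11 : I 1 1 = 1) (hI10 : I 1 0 = 0)
    (hIrange : ∀ a ∈ Set.Icc (0 : ℝ) 1, ∀ b ∈ Set.Icc (0 : ℝ) 1, I a b ∈ Set.Icc (0 : ℝ) 1)
    (C : ℝ → ℝ → ℝ) (hC : ∀ a b, C a b = 1 - I a (1 - b))
    (M : MonMeasure n) (y : Fin n) (σ ρ : Equiv.Perm (Fin n))
    (hσ : Monotone (fun i : Fin n => I (R (σ i) y) (A (σ i))))
    (hρ : Monotone (fun i : Fin n => C (R (ρ i) y) (1 - A (ρ i)))) :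
    choquet M.m (fun x => I (R x y) (A x)) σ =
      1 - choquet (fun B : Finset (Fin n) => 1 - M.m (Finset.univ \ B))
            (fun x => C (R x y) (1 - A x)) ρ := by
  classical
  open Stmt19Aux in
  rcases Nat.eq_zero_or_pos n with rfl | hn
  · exfalso
    have h1 := M.univ
    rw [Finset.univ_eq_empty, M.empty] at h1
    norm_num at h1
  set f : Fin n → ℝ := fun x => I (R x y) (A x) with hf
  have hCf : ∀ x, C (R x y) (1 - A x) = 1 - f x := by
    intro x
    rw [hC, hf]
    norm_num
  have hg : (fun x => C (R x y) (1 - A x)) = fun x => 1 - f x := funext hCf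
  set μb : Finset (Fin n) → ℝ := fun B => 1 - M.m (Finset.univ \ B) with hμbdef
  have hμb : μb ∅ = 0 := by simp [hμbdef, M.univ]
  set ρ' : Equiv.Perm (Fin n) := Fin.revPerm.trans σ with hρ'def
  have hσmon : Monotone (f ∘ σ) := hσ
  have hρmon : Monotone ((fun x => 1 - f x) ∘ ρ) := by
    have : ((fun x => 1 - f x) ∘ ρ) = fun i => C (R (ρ i) y) (1 - A (ρ i)) := by
      funext i; simp [Function.comp, hCf]
    rw [this]; exact hρ
  have hρ'mon : Monotone ((fun x => 1 - f x) ∘ ρ') := by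
    intro i j hij
    simp only [Function.comp, hρ'def, Equiv.trans_apply, Fin.revPerm_apply]
    have : j.rev ≤ i.rev := Fin.rev_le_rev.mpr hij
    have := hσmon this
    simp only [Function.comp] at this
    linarith
  rw [hg, choquet_congr μb (fun x => 1 - f x) ρ ρ' hρmon hρ'mon]
  rw [choquet_abel M.m M.empty f σ, choquet_abel μb hμb (fun x => 1 - f x) ρ']
  have key : ∀ i ∈ Finset.range n,
      (μb (upSet ρ' i) - μb (upSet ρ' (i + 1))) * vals (fun x => 1 - f x) ρ' i =
      (M.m (upSet σ (n - 1 - i)) - M.m (upSet σ (n - 1 - i + 1))) *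
        (1 - vals f σ (n - 1 - i)) := by
    intro i hi
    rw [Finset.mem_range] at hi
    have hμbU : ∀ k : ℕ, μb (upSet ρ' k) = 1 - M.m (upSet σ (n - k)) := by
      intro k
      rw [hμbdef, upSet_revPerm σ k]
      show 1 - M.m (Finset.univ \ (Finset.univ \ upSet σ (n - k))) =
        1 - M.m (upSet σ (n - k))
      rw [Finset.sdiff_sdiff_self_left, Finset.univ_inter]
    rw [hμbU, hμbU]
    have h1 : n - (i + 1) = n - 1 - i := by omega
    have h2 : n - i = n - 1 - i + 1 := by omega
    rw [h1, h2]
    have hvw : vals (fun x => 1 - f x) ρ' i = 1 - vals f σ (n - 1 - i) := by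
      rw [vals_eq _ ρ' hi, vals_eq f σ (show n - 1 - i < n by omega)]
      simp only [hρ'def, Equiv.trans_apply, Fin.revPerm_apply]
      have hrev : (⟨i, hi⟩ : Fin n).rev = ⟨n - 1 - i, by omega⟩ := by
        ext
        simp only [Fin.val_rev]
        omega
      rw [hrev]
    rw [hvw]
    ring
  rw [Finset.sum_congr rfl key]
  rw [Finset.sum_range_reflect
    (fun j => (M.m (upSet σ j) - M.m (upSet σ (j + 1))) * (1 - vals f σ j)) n]
  have expand : ∀ j ∈ Finset.range n,
      (M.m (upSet σ j) - M.m (upSet σ (j + 1))) * (1 - vals f σ j) =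
      (M.m (upSet σ j) - M.m (upSet σ (j + 1))) -
        (M.m (upSet σ j) - M.m (upSet σ (j + 1))) * vals f σ j := by
    intro j _; ring
  rw [Finset.sum_congr rfl expand, Finset.sum_sub_distrib]
  rw [Finset.sum_range_sub' (fun j => M.m (upSet σ j)) n]
  rw [upSet_zero, upSet_of_le σ (le_refl n), M.univ, M.empty]
  ring
end
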